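/- Let F = GF(q) be a finite field with q elements, R the ring of ternions over F, and n ≥ 1. The number of vectors X ∈ R^{n+1} such that the right ideal I_X generated by the coordinates of X equals the ideal I₁ of ternions with zero first column is exactly q·(q^n − 1)·(q^{n+1} − 1); consequently, the number of non-unimodular free cyclic submodules of R^{n+1} satisfies (q − 1)²·N = (q^n − 1)·(q^{n+1} − 1), i.e., N = (q^n − 1)(q^{n+1} − 1)/(q − 1)². -/

import Mathlib

set_option synthInstance.maxHeartbeats 1000000
set_option maxHeartbeats 1000000

/-- The ring of ternions over a field `F`: the subring of `2×2` matrices over `F`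
consisting of all upper triangular matrices. -/
def ternions (F : Type) [Field F] : Subring (Matrix (Fin 2) (Fin 2) F) where
  carrier := {A | A 1 0 = 0}
  zero_mem' := by simp
  one_mem' := by simp [Matrix.one_apply]
  add_mem' := by
    intro a b ha hb
    simp only [Set.mem_setOf_eq, Matrix.add_apply] at *
    simp [ha, hb]
  neg_mem' := by
    intro a ha
    simp only [Set.mem_setOf_eq, Matrix.neg_apply] at *
    simp [ha]
  mul_mem' := by
    intro a b ha hb
    simp only [Set.mem_setOf_eq, Matrix.mul_apply, Fin.sum_univ_two] at *
    simp [ha, hb]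

/-!
Write `X k = (a k, b k; 0, c k)`. Since `X k * r` has first column `r₀₀ • (a k, 0)` and second
column `r₀₁ • (a k, 0) + r₁₁ • (b k, c k)`, the right ideal generated by `X` is `I₁` exactly when
`a = 0` and the columns `(b k, c k)` span `F²`, i.e. the rows `b, c ∈ Fᵐ` are linearly
independent. The same condition characterises the generators of non-unimodular free cyclic
submodules: for `a = 0`, `r • X = 0` reads `r₀₀ • b + r₀₁ • c = 0 ∧ r₁₁ • c = 0`, while an entry
`a k ≠ 0` together with an entry `c l ≠ 0` makes `X` unimodular. So there are
`(qᵐ - 1)(qᵐ - q)` such vectors. In a finite ring `s * r = 1` forces `r * s = 1`, so the free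
generators of a free cyclic submodule form a single free orbit of `Rˣ`, which has `q(q - 1)²`
elements.
-/

section CyclicSubmodule

variable {R M : Type*} [Ring R] [AddCommGroup M] [Module R M]

variable (R) in
def IsNonUnimodularFree (x : M) : Prop :=
  Function.Injective (fun r : R => r • x) ∧ ¬ ∃ φ : M →ₗ[R] R, φ x = 1

theorem span_singleton_eq_span_singleton_iff_of_injective_smul [IsDedekindFiniteMonoid R]
    {x y : M} (hx : Function.Injective (fun r : R => r • x)) :
    Submodule.span R {y} = Submodule.span R {x} ↔ ∃ u : Rˣ, u • x = y := by
  constructor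
  · intro h
    obtain ⟨r, rfl⟩ := Submodule.mem_span_singleton.mp (h ▸ Submodule.mem_span_singleton_self y)
    obtain ⟨s, hs⟩ :=
      Submodule.mem_span_singleton.mp (h.symm ▸ Submodule.mem_span_singleton_self x)
    have hsr : s * r = 1 := hx (by simpa [mul_smul] using hs)
    exact ⟨⟨r, s, mul_eq_one_comm.mp hsr, hsr⟩, rfl⟩
  · rintro ⟨u, rfl⟩
    exact Submodule.span_singleton_group_smul_eq R u x

theorem IsNonUnimodularFree.units_smul {x : M} (hx : IsNonUnimodularFree R x) (u : Rˣ) :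
    IsNonUnimodularFree R (u • x) := by
  refine ⟨fun r s h => ?_, fun ⟨φ, hφ⟩ => hx.2 ⟨(LinearMap.toSpanSingleton R R (u : R)).comp φ, ?_⟩⟩
  · simpa using hx.1 (by simpa [Units.smul_def, smul_smul] using h : (r * u) • x = (s * u) • x)
  · rw [Units.smul_def, map_smul, smul_eq_mul] at hφ
    simp [Units.eq_inv_of_mul_eq_one_left hφ]

noncomputable def IsNonUnimodularFree.unitsEquivFiber [IsDedekindFiniteMonoid R] {x : M}
    (hx : IsNonUnimodularFree R x) :
    Rˣ ≃ {y : {y : M // IsNonUnimodularFree R y} //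
      Submodule.span R {y.1} = Submodule.span R {x}} :=
  Equiv.ofBijective
    (fun u => ⟨⟨u • x, hx.units_smul u⟩, Submodule.span_singleton_group_smul_eq R u x⟩)
    ⟨fun u v huv => Units.ext (hx.1 (congrArg (·.1.1) huv)),
      fun ⟨⟨y, _⟩, hy⟩ => by
        obtain ⟨u, rfl⟩ := (span_singleton_eq_span_singleton_iff_of_injective_smul hx.1).mp hy
        exact ⟨u, rfl⟩⟩

variable (R M) in
noncomputable def nonUnimodularFreeEquiv [IsDedekindFiniteMonoid R] :
    {x : M // IsNonUnimodularFree R x} ≃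
      {N : Submodule R M // ∃ x, N = Submodule.span R {x} ∧ IsNonUnimodularFree R x} × Rˣ :=
  (Equiv.sigmaFiberEquiv fun x => ⟨Submodule.span R {x.1}, x.1, rfl, x.2⟩).symm.trans <|
    Equiv.sigmaEquivProdOfEquiv fun N =>
      (N.2.choose_spec.2.unitsEquivFiber.trans <| Equiv.subtypeEquivRight fun y => by
        rw [Subtype.ext_iff, ← N.2.choose_spec.1]).symm

end CyclicSubmodule

theorem Matrix.linearIndependent_row_iff_surjective_mulVec {K m n : Type*} [Field K]
    [Fintype m] [Fintype n] (A : Matrix m n K) :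
    LinearIndependent K A.row ↔ Function.Surjective A.mulVec := by
  rw [linearIndependent_iff_card_eq_finrank_span, Set.finrank, ← Matrix.rank_eq_finrank_span_row,
    Matrix.rank, ← Module.finrank_fintype_fun_eq_card (R := K), eq_comm,
    ← Submodule.eq_top_iff_finrank_eq, LinearMap.range_eq_top]
  rfl

namespace Ternions

variable {F : Type} [Field F]

def mk (x y z : F) : ternions F := ⟨!![x, y; 0, z], rfl⟩

@[simp] lemma mk_val_zero_zero (x y z : F) : (mk x y z).val 0 0 = x := rfl
@[simp] lemma mk_val_zero_one (x y z : F) : (mk x y z).val 0 1 = y := rfl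
@[simp] lemma mk_val_one_one (x y z : F) : (mk x y z).val 1 1 = z := rfl

@[simp] lemma val_one_zero (A : ternions F) : A.val 1 0 = 0 := A.2

lemma ext {A B : ternions F} (h₀₀ : A.val 0 0 = B.val 0 0) (h₀₁ : A.val 0 1 = B.val 0 1)
    (h₁₁ : A.val 1 1 = B.val 1 1) : A = B := by
  ext i j
  fin_cases i <;> fin_cases j <;> simp [h₀₀, h₀₁, h₁₁]

lemma ext_iff {A B : ternions F} :
    A = B ↔ A.val 0 0 = B.val 0 0 ∧ A.val 0 1 = B.val 0 1 ∧ A.val 1 1 = B.val 1 1 :=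
  ⟨fun h => h ▸ ⟨rfl, rfl, rfl⟩, fun ⟨h₀₀, h₀₁, h₁₁⟩ => ext h₀₀ h₀₁ h₁₁⟩

@[simp] lemma val_mul_val_zero_zero (A B : ternions F) :
    (A.val * B.val) 0 0 = A.val 0 0 * B.val 0 0 := by
  simp [Matrix.mul_apply, Fin.sum_univ_two]

@[simp] lemma val_mul_val_zero_one (A B : ternions F) :
    (A.val * B.val) 0 1 = A.val 0 0 * B.val 0 1 + A.val 0 1 * B.val 1 1 := by
  simp [Matrix.mul_apply, Fin.sum_univ_two]

@[simp] lemma val_mul_val_one_one (A B : ternions F) :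
    (A.val * B.val) 1 1 = A.val 1 1 * B.val 1 1 := by
  simp [Matrix.mul_apply, Fin.sum_univ_two]

def entry₀₀ : ternions F →+* F where
  toFun A := A.val 0 0
  map_one' := rfl
  map_mul' := val_mul_val_zero_zero
  map_zero' := rfl
  map_add' _ _ := rfl

def entry₁₁ : ternions F →+* F where
  toFun A := A.val 1 1
  map_one' := rfl
  map_mul' := val_mul_val_one_one
  map_zero' := rfl
  map_add' _ _ := rfl

lemma isUnit_iff {A : ternions F} : IsUnit A ↔ A.val 0 0 ≠ 0 ∧ A.val 1 1 ≠ 0 := by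
  refine ⟨fun h => ⟨(h.map entry₀₀).ne_zero, (h.map entry₁₁).ne_zero⟩, fun ⟨h₀, h₁⟩ => ?_⟩
  refine ⟨⟨A, mk (A.val 0 0)⁻¹ (-((A.val 0 0)⁻¹ * (A.val 0 1 * (A.val 1 1)⁻¹))) (A.val 1 1)⁻¹,
    ext ?_ ?_ ?_, ext ?_ ?_ ?_⟩, rfl⟩ <;> simp [h₀, h₁, mul_assoc]

noncomputable def unitsEquiv : (ternions F)ˣ ≃ Fˣ × F × Fˣ where
  toFun u := (Units.map entry₀₀.toMonoidHom u, u.val.val 0 1, Units.map entry₁₁.toMonoidHom u)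
  invFun t := (isUnit_iff.mpr (⟨t.1.ne_zero, t.2.2.ne_zero⟩ :
    (mk (t.1 : F) t.2.1 t.2.2).val 0 0 ≠ 0 ∧ _)).unit
  left_inv u := Units.ext (ext rfl rfl rfl)
  right_inv t := by ext <;> rfl

lemma card_units [Fintype F] :
    Nat.card (ternions F)ˣ = (Fintype.card F - 1) * (Fintype.card F * (Fintype.card F - 1)) := by
  rw [Nat.card_congr unitsEquiv, Nat.card_prod, Nat.card_prod, Nat.card_units,
    Nat.card_eq_fintype_card]

variable {m : ℕ}

def secondColumn (X : Fin m → ternions F) : Matrix (Fin 2) (Fin m) F :=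
  Matrix.of ![fun k => (X k).val 0 1, fun k => (X k).val 1 1]

def GeneratesI₁ (X : Fin m → ternions F) : Prop :=
  (∀ k, (X k).val 0 0 = 0) ∧ LinearIndependent F (secondColumn X).row

lemma mem_span_range_iff {X : Fin m → ternions F} (hX : ∀ k, (X k).val 0 0 = 0)
    (A : ternions F) :
    A ∈ Submodule.span (ternions F)ᵐᵒᵖ (Set.range X) ↔
      A.val 0 0 = 0 ∧ ∃ t, (secondColumn X).mulVec t = ![A.val 0 1, A.val 1 1] := by
  simp only [Submodule.mem_span_range_iff_exists_fun, MulOpposite.smul_eq_mul_unop]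
  constructor
  · rintro ⟨c, rfl⟩
    refine ⟨by simp [Matrix.sum_apply, hX], fun k => (c k).unop.val 1 1, ?_⟩
    ext j
    fin_cases j <;> simp [Matrix.sum_apply, hX, secondColumn, Matrix.mulVec, dotProduct]
  · rintro ⟨hA, t, ht⟩
    have h₀ : ∑ k, (X k).val 0 1 * t k = A.val 0 1 := congrFun ht 0
    have h₁ : ∑ k, (X k).val 1 1 * t k = A.val 1 1 := congrFun ht 1
    refine ⟨fun k => MulOpposite.op (mk 0 0 (t k)), ext ?_ ?_ ?_⟩ <;>
      simp [Matrix.sum_apply, hX, hA, h₀, h₁]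

lemma coe_span_range_eq_iff (X : Fin m → ternions F) :
    (Submodule.span (ternions F)ᵐᵒᵖ (Set.range X) : Set (ternions F)) =
      {A : ternions F | A.val 0 0 = 0} ↔ GeneratesI₁ X := by
  rw [GeneratesI₁, Matrix.linearIndependent_row_iff_surjective_mulVec]
  constructor
  · intro h
    have hX (k : Fin m) : (X k).val 0 0 = 0 := by
      have : X k ∈ (Submodule.span (ternions F)ᵐᵒᵖ (Set.range X) : Set (ternions F)) :=
        Submodule.subset_span (Set.mem_range_self k)
      rwa [h] at this
    refine ⟨hX, fun w => ?_⟩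
    have hw : mk 0 (w 0) (w 1) ∈ Submodule.span (ternions F)ᵐᵒᵖ (Set.range X) := by
      rw [← SetLike.mem_coe, h]; rfl
    obtain ⟨-, t, ht⟩ := (mem_span_range_iff hX _).mp hw
    exact ⟨t, ht.trans (by ext j; fin_cases j <;> rfl)⟩
  · rintro ⟨hX, hsurj⟩
    ext A
    simp only [SetLike.mem_coe, mem_span_range_iff hX, Set.mem_ofPred_eq]
    exact and_iff_left (hsurj _)

lemma smul_eq_zero_iff {X : Fin m → ternions F} (hX : ∀ k, (X k).val 0 0 = 0) (r : ternions F) :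
    r • X = 0 ↔ r.val 0 0 • secondColumn X 0 + r.val 0 1 • secondColumn X 1 = 0 ∧
      r.val 1 1 • secondColumn X 1 = 0 := by
  simp [funext_iff, ext_iff, hX, secondColumn, forall_and, -mul_eq_zero, -smul_eq_zero]

lemma injective_smul_iff_linearIndependent {X : Fin m → ternions F}
    (hX : ∀ k, (X k).val 0 0 = 0) :
    Function.Injective (fun r : ternions F => r • X) ↔
      LinearIndependent F (secondColumn X).row := by
  have hrow : (secondColumn X).row = ![secondColumn X 0, secondColumn X 1] := by
    ext i; fin_cases i <;> rfl
  change Function.Injective (LinearMap.toSpanSingleton (ternions F) _ X) ↔ _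
  rw [hrow, LinearIndependent.pair_iff, injective_iff_map_eq_zero]
  simp only [LinearMap.toSpanSingleton_apply]
  constructor
  · intro h s t hst
    have h0 := h (mk s t 0) ((smul_eq_zero_iff hX _).mpr ⟨hst, zero_smul _ _⟩)
    exact ⟨congrArg (·.val 0 0) h0, congrArg (·.val 0 1) h0⟩
  · intro h r hr
    obtain ⟨h₀, h₁⟩ := (smul_eq_zero_iff hX r).mp hr
    obtain ⟨hr₀₀, hr₀₁⟩ := h _ _ h₀
    obtain ⟨-, hr₁₁⟩ := h 0 _ (by rwa [zero_smul, zero_add])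
    exact ext hr₀₀ hr₀₁ hr₁₁

lemma exists_val_one_one_ne_zero_of_injective {X : Fin m → ternions F}
    (hX : Function.Injective (fun r : ternions F => r • X)) : ∃ k, (X k).val 1 1 ≠ 0 := by
  by_contra! h
  have h0 : mk 0 0 1 = (0 : ternions F) :=
    hX (funext fun k => by simp [ext_iff, h k])
  simpa using congrArg (·.val 1 1) h0

lemma exists_linearMap_eq_one {X : Fin m → ternions F} {k l : Fin m} (hk : (X k).val 0 0 ≠ 0)
    (hl : (X l).val 1 1 ≠ 0) :
    ∃ φ : (Fin m → ternions F) →ₗ[ternions F] ternions F, φ X = 1 := by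
  -- `φ Y = Y k * Q + Y l * Q'`: the diagonals of `X k * Q` and `X l * Q'` are `(1, 0)` and
  -- `(0, 1)`, and `Q₀₁` cancels the corner entry `b l / c l` of `X l * Q'`.
  refine ⟨(LinearMap.toSpanSingleton _ _ (mk ((X k).val 0 0)⁻¹
      (-(((X k).val 0 0)⁻¹ * ((X l).val 0 1 * ((X l).val 1 1)⁻¹))) 0)).comp (LinearMap.proj k) +
    (LinearMap.toSpanSingleton _ _ (mk 0 0 ((X l).val 1 1)⁻¹)).comp (LinearMap.proj l),
    ext ?_ ?_ ?_⟩ <;> simp [hk, hl]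

lemma not_exists_linearMap_eq_one {X : Fin m → ternions F} (hX : ∀ k, (X k).val 0 0 = 0) :
    ¬ ∃ φ : (Fin m → ternions F) →ₗ[ternions F] ternions F, φ X = 1 := by
  rintro ⟨φ, hφ⟩
  have h := congrArg (·.val 0 0) hφ
  rw [LinearMap.pi_apply_eq_sum_univ] at h
  simp [Matrix.sum_apply, hX] at h

theorem isNonUnimodularFree_iff {X : Fin m → ternions F} :
    IsNonUnimodularFree (ternions F) X ↔ GeneratesI₁ X := by
  constructor
  · rintro ⟨hinj, hnon⟩
    have hX (k : Fin m) : (X k).val 0 0 = 0 := by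
      by_contra hk
      obtain ⟨l, hl⟩ := exists_val_one_one_ne_zero_of_injective hinj
      exact hnon (exists_linearMap_eq_one hk hl)
    exact ⟨hX, (injective_smul_iff_linearIndependent hX).mp hinj⟩
  · rintro ⟨hX, hli⟩
    exact ⟨(injective_smul_iff_linearIndependent hX).mpr hli, not_exists_linearMap_eq_one hX⟩

lemma row_secondColumn_mk (s : Fin 2 → Fin m → F) :
    (secondColumn fun k => mk 0 (s 0 k) (s 1 k)).row = s := by
  ext i; fin_cases i <;> rfl

def generatesI₁Equiv : {X : Fin m → ternions F // GeneratesI₁ X} ≃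
    {s : Fin 2 → Fin m → F // LinearIndependent F s} where
  toFun X := ⟨(secondColumn X.1).row, X.2.2⟩
  invFun s :=
    ⟨fun k => mk 0 (s.1 0 k) (s.1 1 k), fun _ => rfl, (row_secondColumn_mk s.1).symm ▸ s.2⟩
  left_inv X := Subtype.ext <| funext fun k => ext (X.2.1 k).symm rfl rfl
  right_inv s := Subtype.ext (row_secondColumn_mk s.1)

lemma card_generatesI₁ [Fintype F] (hm : 2 ≤ m) :
    Nat.card {X : Fin m → ternions F // GeneratesI₁ X} =
      (Fintype.card F ^ m - 1) * (Fintype.card F ^ m - Fintype.card F) := by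
  rw [Nat.card_congr generatesI₁Equiv, card_linearIndependent (by simpa using hm),
    Fin.prod_univ_two]
  simp

end Ternions

/-- Over `F = GF(q)`, the number of vectors `X ∈ R^{n+1}` whose coordinates generate as
right ideal exactly `I₁` (zero first column) is `q·(q^n - 1)·(q^{n+1} - 1)`;
consequently the number `N` of non-unimodular free cyclic submodules of `R^{n+1}`
satisfies `(q - 1)² · N = (q^n - 1)·(q^{n+1} - 1)`. -/
theorem ternion_count_nonUnimodular_free (F : Type) [Field F] [Fintype F] (q n : ℕ)
    (hq : Fintype.card F = q) (hn : 1 ≤ n) :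
    Nat.card {X : Fin (n + 1) → ternions F //
        (Submodule.span (ternions F)ᵐᵒᵖ (Set.range X) : Set (ternions F)) =
          {A : ternions F | A.val 0 0 = 0}} = q * (q ^ n - 1) * (q ^ (n + 1) - 1) ∧
    (q - 1) ^ 2 *
        Nat.card {M : Submodule (ternions F) (Fin (n + 1) → ternions F) //
          ∃ X : Fin (n + 1) → ternions F, M = Submodule.span (ternions F) {X} ∧
            Function.Injective (fun r : ternions F => r • X) ∧
            ¬ ∃ φ : (Fin (n + 1) → ternions F) →ₗ[ternions F] ternions F, φ X = 1} =
      (q ^ n - 1) * (q ^ (n + 1) - 1) := by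
  subst hq
  have hcount : Nat.card {X : Fin (n + 1) → ternions F // Ternions.GeneratesI₁ X} =
      Fintype.card F * (Fintype.card F ^ n - 1) * (Fintype.card F ^ (n + 1) - 1) := by
    rw [Ternions.card_generatesI₁ (by omega), pow_succ', ← Nat.mul_sub_one]
    ring
  have hsubmodules := Nat.card_congr <|
    (Equiv.subtypeEquivRight fun X => Ternions.isNonUnimodularFree_iff.symm).trans
      (nonUnimodularFreeEquiv (ternions F) (Fin (n + 1) → ternions F))
  unfold IsNonUnimodularFree at hsubmodules
  rw [Nat.card_prod, Ternions.card_units, hcount] at hsubmodules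
  refine ⟨?_, ?_⟩
  · rw [← hcount]
    exact Nat.card_congr (Equiv.subtypeEquivRight Ternions.coe_span_range_eq_iff)
  · apply Nat.eq_of_mul_eq_mul_left (Fintype.card_pos (α := F))
    linarith
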